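/- Let T be a trivalent finite tree with n ≥ 3 leaves (every internal vertex has degree 3), and let ℓ and ℓ' be two weight functions from the edges of T to the nonnegative reals. If d_{ij}(T, ℓ) = d_{ij}(T, ℓ') for every pair of distinct leaves i, j of T, then ℓ = ℓ'; that is, for a fixed trivalent tree the 2-dissimilarity vector determines the edge weights. -/

import Mathlib

/-- The edge set of the unique path between two vertices of a tree. -/
noncomputable def treePathEdges {V : Type*} [DecidableEq V] (G : SimpleGraph V)
    (hG : G.IsTree) (i j : V) : Finset (Sym2 V) :=
  ((hG.existsUnique_path i j).choose).edges.toFinset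

/-- The tree distance between two vertices: the total weight of the unique path. -/
noncomputable def treeDist {V : Type*} [DecidableEq V] (G : SimpleGraph V)
    (hG : G.IsTree) (ℓ : Sym2 V → ℝ) (i j : V) : ℝ :=
  ∑ e ∈ treePathEdges G hG i j, ℓ e

/-- The combinatorial convex hull of a finite set of vertices of a tree: the union of
the edge sets of the paths between all pairs of members. -/
noncomputable def hullEdges {V : Type*} [DecidableEq V] (G : SimpleGraph V)
    (hG : G.IsTree) (A : Finset V) : Finset (Sym2 V) :=
  A.biUnion fun i => A.biUnion fun j => treePathEdges G hG i j

/-- The dissimilarity of a finite set of vertices of a weighted tree: the total weight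
of its combinatorial convex hull. -/
noncomputable def dissim {V : Type*} [DecidableEq V] (G : SimpleGraph V)
    (hG : G.IsTree) (ℓ : Sym2 V → ℝ) (A : Finset V) : ℝ :=
  ∑ e ∈ hullEdges G hG A, ℓ e

/-- A vertex of a graph is a leaf if it has exactly one neighbor. -/
def IsLeaf {V : Type*} (G : SimpleGraph V) (v : V) : Prop :=
  (G.neighborSet v).ncard = 1

/-!
Deleting an edge `uv` of a tree splits the vertices into the side of `u` and the side of `v`,
and the path between two vertices on opposite sides runs through `uv`. Choose leaves `i, j` on
the side of `u` whose path passes through `u`: leaves beyond two distinct further neighbours of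
`u`, which exist by trivalence, or `i = j = u` when `u` is a leaf. Choose `k, l` likewise for
`v`. The four-point formula `2 ℓ(uv) = d(i,k) + d(j,l) - d(i,j) - d(k,l)` then recovers the
weight of `uv` from distances between leaves.
-/

open SimpleGraph Walk

section TreePath

variable {V : Type*} {G : SimpleGraph V} (hG : G.IsTree)

noncomputable def treePath (i j : V) : G.Walk i j := (hG.existsUnique_path i j).choose

lemma isPath_treePath (i j : V) : (treePath hG i j).IsPath :=
  (hG.existsUnique_path i j).choose_spec.1

lemma eq_treePath {i j : V} {p : G.Walk i j} (hp : p.IsPath) : p = treePath hG i j :=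
  (hG.existsUnique_path i j).choose_spec.2 p hp

lemma treePath_self (i : V) : treePath hG i i = nil := (eq_treePath hG IsPath.nil).symm

lemma treePath_adj {u v : V} (h : G.Adj u v) : treePath hG u v = h.toWalk :=
  (eq_treePath hG (IsPath.of_adj h)).symm

lemma reverse_treePath (i j : V) : (treePath hG i j).reverse = treePath hG j i :=
  eq_treePath hG (isPath_treePath hG i j).reverse

lemma treePath_concat {i u v : V} (h : G.Adj u v) (hv : v ∉ (treePath hG i u).support) :
    treePath hG i v = (treePath hG i u).concat h :=
  (eq_treePath hG ((isPath_treePath hG i u).concat hv h)).symm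

lemma edges_treePath_subset [DecidableEq V] {i j : V} (p : G.Walk i j) :
    (treePath hG i j).edges ⊆ p.edges := by
  rw [← eq_treePath hG p.bypass_isPath]
  exact p.edges_bypass_subset_edges

lemma support_treePath_subset_of_mem [DecidableEq V] {i j x : V}
    (hx : x ∈ (treePath hG i j).support) :
    (treePath hG x j).support ⊆ (treePath hG i j).support := by
  rw [← eq_treePath hG ((isPath_treePath hG i j).dropUntil hx)]
  exact (treePath hG i j).support_dropUntil_subset_support hx

end TreePath

section TreeSide

variable {V : Type*} {G : SimpleGraph V} (hG : G.IsTree)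

/-- For an edge `uv`, the vertices on the side of `u`: the component of `u` in `T - uv`. -/
def treeSide (u v : V) : Set V := {x | v ∉ (treePath hG x u).support}

lemma mem_treeSide_self {u v : V} (huv : G.Adj u v) : u ∈ treeSide hG u v := by
  simp [treeSide, treePath_self, huv.ne']

variable [DecidableEq V]

lemma mem_support_treePath_of_mem_treeSide {u v i k : V} (huv : G.Adj u v)
    (hi : i ∈ treeSide hG u v) (hk : k ∈ treeSide hG v u) :
    u ∈ (treePath hG i k).support := by
  by_contra hu
  -- otherwise `v → k → i → u` is a walk from `v` to `u` avoiding the edge `uv`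
  have hedge := edges_treePath_subset hG
    ((treePath hG k v).reverse.append ((treePath hG i k).reverse.append (treePath hG i u)))
    (by simp [treePath_adj hG huv.symm] : s(v, u) ∈ (treePath hG v u).edges)
  simp only [edges_append, edges_reverse, List.mem_append, List.mem_reverse] at hedge
  rcases hedge with h | h | h
  · exact hk ((treePath hG k v).snd_mem_support_of_mem_edges h)
  · exact hu ((treePath hG i k).snd_mem_support_of_mem_edges h)
  · exact hi ((treePath hG i u).fst_mem_support_of_mem_edges h)

lemma disjoint_treeSide {u v : V} (huv : G.Adj u v) :
    Disjoint (treeSide hG u v) (treeSide hG v u) := by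
  refine Set.disjoint_left.mpr fun x hxu hxv => ?_
  have hux := mem_support_treePath_of_mem_treeSide hG huv hxu hxv
  simp only [treePath_self, support_nil, List.mem_singleton] at hux
  subst hux
  exact hxv (treePath hG u v).start_mem_support

lemma treeSide_subset_of_adj {u v w : V} (huv : G.Adj u v) (hwu : G.Adj w u) (hwv : w ≠ v) :
    treeSide hG w u ⊆ treeSide hG u v := by
  intro x hx hv
  rw [treePath_concat hG hwu hx, support_concat, List.mem_append,
    List.mem_singleton] at hv
  rcases hv with hv | rfl
  · refine Set.disjoint_left.mp (disjoint_treeSide hG hwu)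
      (fun hu => hx (support_treePath_subset_of_mem hG hv hu)) ?_
    simp [treeSide, treePath_adj hG huv.symm, hwv, hwu.ne]
  · exact huv.ne rfl

lemma mem_support_treePath_of_adj {u a b i j : V} (hau : G.Adj a u) (hbu : G.Adj b u)
    (hab : a ≠ b) (hi : i ∈ treeSide hG a u) (hj : j ∈ treeSide hG b u) :
    u ∈ (treePath hG i j).support := by
  have hj' := treeSide_subset_of_adj hG hau.symm hbu hab.symm hj
  rw [← reverse_treePath, support_reverse, List.mem_reverse]
  exact mem_support_treePath_of_mem_treeSide hG hau.symm hj' hi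

lemma exists_isLeaf_mem_treeSide [Finite V] {u v : V} (huv : G.Adj u v) :
    ∃ i, IsLeaf G i ∧ i ∈ treeSide hG u v := by
  induction hn : (treeSide hG u v).ncard using Nat.strong_induction_on generalizing u v with
  | _ n ih =>
  by_cases hu : IsLeaf G u
  · exact ⟨u, hu, mem_treeSide_self hG huv⟩
  obtain ⟨w, huw, hwv⟩ : ∃ w, G.Adj u w ∧ w ≠ v := by
    by_contra! h
    have hnbr : G.neighborSet u = {v} := Set.eq_singleton_iff_unique_mem.mpr ⟨huv, h⟩
    exact hu (by rw [IsLeaf, hnbr, Set.ncard_singleton])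
  have hsub := treeSide_subset_of_adj hG huv huw.symm hwv
  have hlt : (treeSide hG w u).ncard < n := hn ▸ Set.ncard_lt_ncard
    ⟨hsub, fun h => h (mem_treeSide_self hG huv) (treePath hG u w).start_mem_support⟩
  obtain ⟨i, hi, hiw⟩ := ih _ hlt huw.symm rfl
  exact ⟨i, hi, hsub hiw⟩

lemma exists_isLeaf_pair_through [Finite V] {u v : V} (huv : G.Adj u v)
    (hu : ¬ IsLeaf G u → 2 < (G.neighborSet u).ncard) :
    ∃ i j, IsLeaf G i ∧ IsLeaf G j ∧ i ∈ treeSide hG u v ∧ j ∈ treeSide hG u v ∧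
      u ∈ (treePath hG i j).support := by
  by_cases hleaf : IsLeaf G u
  · refine ⟨u, u, hleaf, hleaf, mem_treeSide_self hG huv, mem_treeSide_self hG huv, ?_⟩
    simp [treePath_self]
  have hcard : 1 < (G.neighborSet u \ {v}).ncard := by
    have := Set.ncard_sdiff_singleton_of_mem (show v ∈ G.neighborSet u from huv)
    have := hu hleaf
    omega
  obtain ⟨a, b, ⟨hua, hav⟩, ⟨hub, hbv⟩, hab⟩ := (Set.one_lt_ncard_iff).mp hcard
  have hau : G.Adj a u := (G.mem_neighborSet u a).mp hua |>.symm
  have hbu : G.Adj b u := (G.mem_neighborSet u b).mp hub |>.symm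
  obtain ⟨i, hi, hia⟩ := exists_isLeaf_mem_treeSide hG hau
  obtain ⟨j, hj, hjb⟩ := exists_isLeaf_mem_treeSide hG hbu
  exact ⟨i, j, hi, hj, treeSide_subset_of_adj hG huv hau hav hia,
    treeSide_subset_of_adj hG huv hbu hbv hjb, mem_support_treePath_of_adj hG hau hbu hab hia hjb⟩

end TreeSide

section TreeDist

variable {V : Type*} [DecidableEq V] {G : SimpleGraph V} (hG : G.IsTree) (f : Sym2 V → ℝ)

lemma treeDist_eq_sum_edges {i j : V} {p : G.Walk i j} (hp : p.IsPath) :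
    treeDist G hG f i j = (p.edges.map f).sum := by
  change ∑ e ∈ (treePath hG i j).edges.toFinset, f e = _
  rw [← eq_treePath hG hp, List.sum_toFinset _ hp.edges_nodup]

lemma treeDist_self (i : V) : treeDist G hG f i i = 0 := by
  simp [treeDist_eq_sum_edges hG f (isPath_treePath hG i i), treePath_self]

lemma treeDist_comm (i j : V) : treeDist G hG f i j = treeDist G hG f j i := by
  rw [treeDist_eq_sum_edges hG f (isPath_treePath hG i j),
    treeDist_eq_sum_edges hG f (isPath_treePath hG j i), ← reverse_treePath, edges_reverse,
    List.map_reverse, List.sum_reverse]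

lemma treeDist_eq_add_of_mem_support {i j v : V} (hv : v ∈ (treePath hG i j).support) :
    treeDist G hG f i j = treeDist G hG f i v + treeDist G hG f v j := by
  have hp := isPath_treePath hG i j
  rw [treeDist_eq_sum_edges hG f hp, ← (treePath hG i j).take_spec hv, edges_append,
    List.map_append, List.sum_append, ← treeDist_eq_sum_edges hG f (hp.takeUntil hv),
    ← treeDist_eq_sum_edges hG f (hp.dropUntil hv)]

lemma treeDist_concat {i u v : V} (h : G.Adj u v) (hv : v ∉ (treePath hG i u).support) :
    treeDist G hG f i v = treeDist G hG f i u + f s(u, v) := by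
  rw [treeDist_eq_sum_edges hG f (isPath_treePath hG i v), treePath_concat hG h hv,
    edges_concat, List.concat_eq_append, List.map_append, List.sum_append,
    ← treeDist_eq_sum_edges hG f (isPath_treePath hG i u)]
  simp

lemma treeDist_eq_of_mem_treeSide {u v i k : V} (huv : G.Adj u v)
    (hi : i ∈ treeSide hG u v) (hk : k ∈ treeSide hG v u) :
    treeDist G hG f i k = treeDist G hG f i u + f s(u, v) + treeDist G hG f v k := by
  rw [treeDist_eq_add_of_mem_support hG f (mem_support_treePath_of_mem_treeSide hG huv hi hk),
    treeDist_comm hG f u k, treeDist_concat hG f huv.symm hk, treeDist_comm hG f k v,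
    Sym2.eq_swap]
  ring

lemma two_mul_eq_four_point {u v i j k l : V} (huv : G.Adj u v)
    (hi : i ∈ treeSide hG u v) (hj : j ∈ treeSide hG u v)
    (hij : u ∈ (treePath hG i j).support)
    (hk : k ∈ treeSide hG v u) (hl : l ∈ treeSide hG v u)
    (hkl : v ∈ (treePath hG k l).support) :
    2 * f s(u, v) = treeDist G hG f i k + treeDist G hG f j l
      - treeDist G hG f i j - treeDist G hG f k l := by
  rw [treeDist_eq_of_mem_treeSide hG f huv hi hk, treeDist_eq_of_mem_treeSide hG f huv hj hl,
    treeDist_eq_add_of_mem_support hG f hij, treeDist_eq_add_of_mem_support hG f hkl,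
    treeDist_comm hG f u j, treeDist_comm hG f k v]
  ring

end TreeDist

theorem trivalent_tree_weights_determined_by_leaf_distances_general
    {V : Type*} [Fintype V] [DecidableEq V] (G : SimpleGraph V) (hG : G.IsTree)
    (htrivalent : ∀ v : V, ¬ IsLeaf G v → (G.neighborSet v).ncard = 3)
    (ℓ ℓ' : Sym2 V → ℝ)
    (hdist : ∀ i j : V, IsLeaf G i → IsLeaf G j → i ≠ j →
      treeDist G hG ℓ i j = treeDist G hG ℓ' i j) :
    ∀ e ∈ G.edgeSet, ℓ e = ℓ' e := by
  have hleaf : ∀ i j : V, IsLeaf G i → IsLeaf G j →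
      treeDist G hG ℓ i j = treeDist G hG ℓ' i j := by
    intro i j hi hj
    rcases eq_or_ne i j with rfl | hij
    · rw [treeDist_self, treeDist_self]
    · exact hdist i j hi hj hij
  intro e he
  induction e using Sym2.ind with
  | _ u v =>
  obtain ⟨i, j, hi, hj, hiu, hju, hij⟩ := exists_isLeaf_pair_through hG he (htrivalent u · |>.ge)
  obtain ⟨k, l, hk, hl, hkv, hlv, hkl⟩ := exists_isLeaf_pair_through hG he.symm (htrivalent v · |>.ge)
  have hℓ := two_mul_eq_four_point hG ℓ he hiu hju hij hkv hlv hkl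
  have hℓ' := two_mul_eq_four_point hG ℓ' he hiu hju hij hkv hlv hkl
  linarith [hleaf i k hi hk, hleaf j l hj hl, hleaf i j hi hj, hleaf k l hk hl]

/-- For a fixed trivalent finite tree with at least three leaves, the `2`-dissimilarity
vector determines the edge weights: if two nonnegative weight functions induce the same
distances between all pairs of distinct leaves, then they agree on every edge. -/
theorem trivalent_tree_weights_determined_by_leaf_distances
    {V : Type*} [Fintype V] [DecidableEq V] (G : SimpleGraph V) (hG : G.IsTree)
    (hleaves : 3 ≤ {v : V | IsLeaf G v}.ncard)
    (htrivalent : ∀ v : V, ¬ IsLeaf G v → (G.neighborSet v).ncard = 3)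
    (ℓ ℓ' : Sym2 V → ℝ)
    (hℓ : ∀ e ∈ G.edgeSet, 0 ≤ ℓ e) (hℓ' : ∀ e ∈ G.edgeSet, 0 ≤ ℓ' e)
    (hdist : ∀ i j : V, IsLeaf G i → IsLeaf G j → i ≠ j →
      treeDist G hG ℓ i j = treeDist G hG ℓ' i j) :
    ∀ e ∈ G.edgeSet, ℓ e = ℓ' e :=
  trivalent_tree_weights_determined_by_leaf_distances_general G hG htrivalent ℓ ℓ' hdist
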